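/- arXiv:2010.13734 — 3 statements merged into one kernel-verified Lean document; each statement's English description precedes it below -/
import Mathlib

section
/- For the threshold graphon W(x,y) = 1_{⟨x,y⟩ ≥ τ} on B^d with measure F_ν and 0 < τ < 1, the map t ↦ d_W(tN) is strictly increasing on (τ, 1], where N is a fixed unit vector. -/
open MeasureTheory Real
open scoped RealInnerProductSpace

/-- The probability measure `F_ν` on the unit ball of `ℝ^d` with density
proportional to `(1 - ‖x‖²)^(ν - 1/2)` with respect to Lebesgue measure. -/
noncomputable def Fnu (d : ℕ) (ν : ℝ) : Measure (EuclideanSpace ℝ (Fin d)) :=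
  letI base : Measure (EuclideanSpace ℝ (Fin d)) :=
    (volume.restrict (Metric.closedBall 0 1)).withDensity
      (fun x => ENNReal.ofReal ((1 - ‖x‖ ^ 2) ^ (ν - 1 / 2)))
  (base Set.univ)⁻¹ • base

/-- The degree function of the threshold graphon `W(x,y) = 1_{⟨x,y⟩ ≥ τ}`
on the unit ball, with latent measure `F_ν`. -/
noncomputable def degW (d : ℕ) (ν τ : ℝ) (x : EuclideanSpace ℝ (Fin d)) : ℝ :=
  (Fnu d ν {y | τ ≤ ⟪x, y⟫}).toReal

/-- The regularized incomplete Beta function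
`I(x; a, b) = (1/B(a,b)) ∫_0^x t^(a-1) (1-t)^(b-1) dt`. -/
noncomputable def regIncBeta (x a b : ℝ) : ℝ :=
  (∫ t in (0 : ℝ)..x, t ^ (a - 1) * (1 - t) ^ (b - 1)) * Real.Gamma (a + b) /
    (Real.Gamma a * Real.Gamma b)

/-! For `t > 0`, `d_W(tN)` is the `F_ν`-mass of the cap `{y | τ / t ≤ ⟪N, y⟫}`, and `τ / t`
decreases on `(τ, 1]` and stays in `(0, 1)`. Between two thresholds in `(-1, 1)` the caps differ
by an open slab meeting the open unit ball, where the density of `F_ν` is positive, so the mass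
strictly drops. This needs `F_ν` to be a genuine probability measure, i.e. the density
`(1 - ‖x‖²)^(ν - 1/2)` to be integrable on the ball: in polar coordinates this is integrability
of `(1 - r)^(ν - 1/2)` near `r = 1`, which is where `ν > -1/2` enters. -/

open Set Metric

lemma integrableOn_Ioo_pow_mul_one_sub_sq_rpow (n : ℕ) {p : ℝ} (hp : -1 < p) :
    IntegrableOn (fun y : ℝ => y ^ n * (1 - y ^ 2) ^ p) (Ioo 0 1) := by
  have hsingular : IntegrableOn (fun y : ℝ => (1 - y) ^ p) (Ioo 0 1) := by
    have h := (intervalIntegral.intervalIntegrable_rpow' hp (a := 0) (b := 1)).comp_sub_left 1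
    rw [sub_zero, sub_self] at h
    exact (intervalIntegrable_iff_integrableOn_Ioo_of_le zero_le_one).1 h.symm
  have hbounded : ContinuousOn (fun y : ℝ => y ^ n * (1 + y) ^ p) (Icc 0 1) :=
    (continuousOn_pow n).mul <| (continuous_const.add continuous_id).continuousOn.rpow_const
      fun y hy => Or.inl (by simp only [Pi.add_apply, id_eq]; linarith [hy.1])
  -- `(1 - y²)^p = (1 - y)^p (1 + y)^p`: only the first factor is singular, at `y = 1`.
  refine (integrableOn_congr_fun (fun y hy => ?_) measurableSet_Ioo).1
    (hsingular.mul_continuousOn_of_subset hbounded measurableSet_Ioo isCompact_Icc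
      Ioo_subset_Icc_self)
  rw [show 1 - y ^ 2 = (1 - y) * (1 + y) by ring,
    Real.mul_rpow (by linarith [hy.2]) (by linarith [hy.1])]
  ring

section AddHaar

variable {E : Type*} [NormedAddCommGroup E] [NormedSpace ℝ E] [FiniteDimensional ℝ E]
  [MeasurableSpace E] [BorelSpace E] [Nontrivial E] (μ : Measure E) [μ.IsAddHaarMeasure]

lemma closedBall_ae_eq_ball_of_addHaar (x : E) (r : ℝ) : closedBall x r =ᵐ[μ] ball x r :=
  ae_eq_set.2 ⟨by rw [closedBall_sdiff_ball]; exact μ.addHaar_sphere x r,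
    by rw [sdiff_eq_empty.2 ball_subset_closedBall, measure_empty]⟩

lemma integrableOn_closedBall_one_sub_norm_sq_rpow {p : ℝ} (hp : -1 < p) :
    IntegrableOn (fun x : E => (1 - ‖x‖ ^ 2) ^ p) (closedBall 0 1) μ := by
  refine IntegrableOn.congr_set_ae ?_ (closedBall_ae_eq_ball_of_addHaar μ 0 1)
  rw [integrableOn_fun_norm_addHaar μ (f := fun y : ℝ => (1 - y ^ 2) ^ p)]
  simpa only [smul_eq_mul] using integrableOn_Ioo_pow_mul_one_sub_sq_rpow _ hp

end AddHaar

variable {d : ℕ} {ν : ℝ}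

noncomputable def unnormalizedFnu (d : ℕ) (ν : ℝ) : Measure (EuclideanSpace ℝ (Fin d)) :=
  (volume.restrict (closedBall 0 1)).withDensity
    (fun x => ENNReal.ofReal ((1 - ‖x‖ ^ 2) ^ (ν - 1 / 2)))

lemma Fnu_eq_smul (d : ℕ) (ν : ℝ) :
    Fnu d ν = (unnormalizedFnu d ν univ)⁻¹ • unnormalizedFnu d ν := rfl

lemma isFiniteMeasure_unnormalizedFnu [Nontrivial (EuclideanSpace ℝ (Fin d))]
    (hν : -1 / 2 < ν) : IsFiniteMeasure (unnormalizedFnu d ν) := by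
  refine ⟨?_⟩
  rw [unnormalizedFnu, withDensity_apply _ MeasurableSet.univ, Measure.restrict_univ]
  exact (integrableOn_closedBall_one_sub_norm_sq_rpow volume (by linarith)).lintegral_lt_top

lemma unnormalizedFnu_pos_of_isOpen {U : Set (EuclideanSpace ℝ (Fin d))} (hU : IsOpen U)
    (hUball : (U ∩ ball 0 1).Nonempty) : 0 < unnormalizedFnu d ν U := by
  rw [pos_iff_ne_zero, ne_eq, unnormalizedFnu, withDensity_apply_eq_zero' (by fun_prop),
    Measure.restrict_apply' measurableSet_closedBall]
  refine fun h => ((hU.inter isOpen_ball).measure_pos volume hUball).ne' (measure_mono_null ?_ h)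
  rintro x ⟨hxU, hx⟩
  have hx1 : ‖x‖ < 1 := mem_ball_zero_iff.1 hx
  have hpos : 0 < 1 - ‖x‖ ^ 2 := by nlinarith [norm_nonneg x]
  exact ⟨⟨(ENNReal.ofReal_pos.2 (rpow_pos_of_pos hpos _)).ne', hxU⟩, ball_subset_closedBall hx⟩

instance : NeZero (unnormalizedFnu d ν) :=
  ⟨fun h => (unnormalizedFnu_pos_of_isOpen (d := d) (ν := ν) isOpen_univ
    ⟨0, trivial, mem_ball_self one_pos⟩).ne' (by rw [h, Measure.coe_zero, Pi.zero_apply])⟩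

lemma isProbabilityMeasure_Fnu [Nontrivial (EuclideanSpace ℝ (Fin d))] (hν : -1 / 2 < ν) :
    IsProbabilityMeasure (Fnu d ν) := by
  have := isFiniteMeasure_unnormalizedFnu (d := d) hν
  rw [Fnu_eq_smul]
  infer_instance

lemma Fnu_pos_of_isOpen [Nontrivial (EuclideanSpace ℝ (Fin d))] (hν : -1 / 2 < ν)
    {U : Set (EuclideanSpace ℝ (Fin d))} (hU : IsOpen U) (hUball : (U ∩ ball 0 1).Nonempty) :
    0 < Fnu d ν U := by
  have := isFiniteMeasure_unnormalizedFnu (d := d) hν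
  rw [Fnu_eq_smul, Measure.smul_apply, smul_eq_mul]
  exact ENNReal.mul_pos (ENNReal.inv_ne_zero.2 (measure_ne_top _ _))
    (unnormalizedFnu_pos_of_isOpen hU hUball).ne'

lemma Fnu_cap_strictAntiOn (hν : -1 / 2 < ν) {N : EuclideanSpace ℝ (Fin d)} (hN : ‖N‖ = 1) :
    StrictAntiOn (fun s : ℝ => (Fnu d ν).real {y | s ≤ ⟪N, y⟫}) (Ioo (-1) 1) := by
  have : Nontrivial (EuclideanSpace ℝ (Fin d)) := nontrivial_of_ne N 0 (by rintro rfl; simp at hN)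
  have := isProbabilityMeasure_Fnu (d := d) hν
  set cap : ℝ → Set (EuclideanSpace ℝ (Fin d)) := fun s => {y | s ≤ ⟪N, y⟫}
  intro s₁ hs₁ s₂ hs₂ h₁₂
  have hcont : Continuous fun y : EuclideanSpace ℝ (Fin d) => ⟪N, y⟫ := by fun_prop
  have hcap : cap s₂ ⊆ cap s₁ := fun y (hy : s₂ ≤ ⟪N, y⟫) => h₁₂.le.trans hy
  set slab := {y | ⟪N, y⟫ ∈ Ioo s₁ s₂}
  have hslab : slab ⊆ cap s₁ \ cap s₂ := fun y hy => ⟨hy.1.le, not_le.2 hy.2⟩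
  have hmid : ((s₁ + s₂) / 2) • N ∈ slab ∩ ball 0 1 := by
    refine ⟨?_, ?_⟩
    · rw [mem_ofPred_eq, real_inner_smul_right, real_inner_self_eq_norm_sq, hN]
      constructor <;> linarith
    · rw [mem_ball_zero_iff, norm_smul, hN, mul_one, norm_eq_abs, abs_lt]
      constructor <;> linarith [hs₁.1, hs₂.2]
  have hgap := Fnu_pos_of_isOpen hν (isOpen_Ioo.preimage hcont) ⟨_, hmid⟩
  refine ENNReal.toReal_strict_mono (measure_ne_top _ _) ?_
  calc Fnu d ν (cap s₂)
      < Fnu d ν (cap s₂) + Fnu d ν (cap s₁ \ cap s₂) :=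
        ENNReal.lt_add_right (measure_ne_top _ _) (hgap.trans_le (measure_mono hslab)).ne'
    _ = Fnu d ν (cap s₁) := by
        rw [measure_add_sdiff (isClosed_le continuous_const hcont).nullMeasurableSet,
          union_eq_right.2 hcap]

lemma degW_smul {τ t : ℝ} (ht : 0 < t) (N : EuclideanSpace ℝ (Fin d)) :
    degW d ν τ (t • N) = (Fnu d ν).real {y | τ / t ≤ ⟪N, y⟫} := by
  simp only [degW, Measure.real, real_inner_smul_left, div_le_iff₀' ht]

theorem degW_strictMonoOn_general (d : ℕ) (ν τ : ℝ) (hν : -1 / 2 < ν)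
    (hτ0 : 0 < τ)
    (N : EuclideanSpace ℝ (Fin d)) (hN : ‖N‖ = 1) :
    StrictMonoOn (fun t : ℝ => degW d ν τ (t • N)) (Set.Ioc τ 1) := by
  refine ((Fnu_cap_strictAntiOn hν hN).comp (f := fun t => τ / t) ?_ ?_).congr
    fun t ht => (degW_smul (hτ0.trans ht.1) N).symm
  · exact fun t₁ ht₁ t₂ _ h₁₂ => div_lt_div_of_pos_left hτ0 (hτ0.trans ht₁.1) h₁₂
  · exact fun t ht => ⟨by linarith [div_pos hτ0 (hτ0.trans ht.1)],
      (div_lt_one (hτ0.trans ht.1)).2 ht.1⟩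

/-- For the threshold graphon on the unit ball with measure `F_ν` and `0 < τ < 1`,
the map `t ↦ d_W(t • N)` is strictly increasing on `(τ, 1]`, for a fixed unit
vector `N`. -/
theorem degW_strictMonoOn (d : ℕ) (hd : 0 < d) (ν τ : ℝ) (hν : -1 / 2 < ν)
    (hτ0 : 0 < τ) (hτ1 : τ < 1)
    (N : EuclideanSpace ℝ (Fin d)) (hN : ‖N‖ = 1) :
    StrictMonoOn (fun t : ℝ => degW d ν τ (t • N)) (Set.Ioc τ 1) :=
  degW_strictMonoOn_general d ν τ hν hτ0 N hN
end

section
/- For the threshold graphon W on B^d with measure F_ν and threshold 0 < τ < 1, the function h ↦ F_ν({x ∈ B^d : d_W(x) ≥ h}) is continuous on (0, h*], where h* = F_ν(B^d \ τB^d). -/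
open MeasureTheory Real
open scoped RealInnerProductSpace

/-!
`d_W(x)` depends only on `‖x‖` by rotation invariance of `F_ν`; it vanishes for `‖x‖ ≤ τ`, since
then `⟨x, y⟩ ≥ τ` forces `y` onto the unit sphere, and it is strictly increasing in `‖x‖` beyond
`τ`, since `F_ν` charges every nonempty open subset of the open ball. Hence for `h > 0` the level
set `{d_W = h}` lies in a single sphere, which is Lebesgue-null and so `F_ν`-null. The tail
`h ↦ μ {f ≥ h}` of a finite measure is continuous wherever the level set `{f = h}` is null.
-/

open Set Filter Topology

section Tail

variable {α β : Type*} [MeasurableSpace α] [LinearOrder β] [TopologicalSpace β] [OrderTopology β]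
  [SecondCountableTopology β] [MeasurableSpace β] [OpensMeasurableSpace β]

theorem continuousAt_measure_le_of_measure_eq_zero {μ : Measure α} [IsFiniteMeasure μ]
    {f : α → β} (hf : Measurable f) {a : β} (ha : μ {x | f x = a} = 0) :
    ContinuousAt (fun h => (μ {x | h ≤ f x}).toReal) a := by
  have h_lim : ∀ᵐ x ∂μ, ∀ᶠ h in 𝓝 a, h ≤ f x ↔ a ≤ f x := by
    filter_upwards [measure_eq_zero_iff_ae_notMem.mp ha] with x hx
    rcases lt_or_gt_of_ne (hx : f x ≠ a) with hlt | hgt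
    · filter_upwards [eventually_gt_nhds hlt] with h hh
      simp only [not_le.mpr hh, not_le.mpr hlt]
    · filter_upwards [eventually_lt_nhds hgt] with h hh
      simp only [hh.le, hgt.le]
  exact (ENNReal.tendsto_toReal (measure_ne_top μ _)).comp
    (tendsto_measure_of_ae_tendsto_indicator_of_isFiniteMeasure _
      (measurableSet_le measurable_const hf) (fun _ => measurableSet_le measurable_const hf) h_lim)

end Tail

section InnerProductSpace

variable {E : Type*} [NormedAddCommGroup E] [InnerProductSpace ℝ E] [MeasurableSpace E]
  [OpensMeasurableSpace E]

theorem measurableSet_le_inner (c : ℝ) (x : E) : MeasurableSet {y | c ≤ ⟪x, y⟫} :=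
  measurableSet_le measurable_const (continuous_const.inner continuous_id).measurable

theorem measure_le_inner_lt_of_lt {μ : Measure E} [IsFiniteMeasure μ]
    (hμ : ∀ U, IsOpen U → (U ∩ Metric.ball 0 1).Nonempty → μ U ≠ 0) (x : E) {a b : ℝ}
    (ha : 0 ≤ a) (hab : a < b) (hb : b ≤ ‖x‖) :
    μ {y | b ≤ ⟪x, y⟫} < μ {y | a ≤ ⟪x, y⟫} := by
  have hcont : Continuous fun y => ⟪x, y⟫ := continuous_const.inner continuous_id
  set U := {y | a < ⟪x, y⟫ ∧ ⟪x, y⟫ < b}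
  have hU : IsOpen U := (isOpen_lt continuous_const hcont).inter (isOpen_lt hcont continuous_const)
  have hx : 0 < ‖x‖ := by linarith
  obtain ⟨m, ham, hmb⟩ := exists_between hab
  have hU_meets : (U ∩ Metric.ball 0 1).Nonempty := by
    refine ⟨(m / ‖x‖ ^ 2) • x, ?_, ?_⟩
    · have : ⟪x, (m / ‖x‖ ^ 2) • x⟫ = m := by
        rw [real_inner_smul_right, real_inner_self_eq_norm_sq]
        field_simp
      show a < _ ∧ _ < b
      rw [this]
      exact ⟨ham, hmb⟩
    · have hm : 0 ≤ m := by linarith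
      rw [mem_ball_zero_iff, norm_smul, Real.norm_of_nonneg (by positivity)]
      calc m / ‖x‖ ^ 2 * ‖x‖ = m / ‖x‖ := by field_simp
        _ < 1 := by rw [div_lt_one hx]; linarith
  have hdisj : Disjoint {y | b ≤ ⟪x, y⟫} U :=
    disjoint_left.mpr fun y hy hyU => (not_le.mpr hyU.2) hy
  have hsub : {y | b ≤ ⟪x, y⟫} ∪ U ⊆ {y | a ≤ ⟪x, y⟫} := by
    rintro y (hy | hy)
    · exact hab.le.trans hy
    · exact hy.1.le
  calc μ {y | b ≤ ⟪x, y⟫} < μ {y | b ≤ ⟪x, y⟫} + μ U :=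
        ENNReal.lt_add_right (measure_ne_top μ _) (hμ U hU hU_meets)
    _ = μ ({y | b ≤ ⟪x, y⟫} ∪ U) := (measure_union hdisj hU.measurableSet).symm
    _ ≤ μ {y | a ≤ ⟪x, y⟫} := measure_mono hsub

end InnerProductSpace

noncomputable def fnuBase (d : ℕ) (ν : ℝ) : Measure (EuclideanSpace ℝ (Fin d)) :=
  (volume.restrict (Metric.closedBall 0 1)).withDensity
    (fun x => ENNReal.ofReal ((1 - ‖x‖ ^ 2) ^ (ν - 1 / 2)))

section Fnu

variable {d : ℕ} {ν : ℝ}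

theorem measurable_fnuBase_density : Measurable fun x : EuclideanSpace ℝ (Fin d) =>
    ENNReal.ofReal ((1 - ‖x‖ ^ 2) ^ (ν - 1 / 2)) := by
  fun_prop

theorem fnuBase_pos_of_isOpen {U : Set (EuclideanSpace ℝ (Fin d))} (hU : IsOpen U)
    (hne : (U ∩ Metric.ball 0 1).Nonempty) : 0 < fnuBase d ν U := by
  rw [fnuBase, withDensity_apply _ hU.measurableSet, Measure.restrict_restrict hU.measurableSet,
    setLIntegral_pos_iff measurable_fnuBase_density]
  have hsub : U ∩ Metric.ball 0 1 ⊆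
      Function.support (fun x : EuclideanSpace ℝ (Fin d) =>
        ENNReal.ofReal ((1 - ‖x‖ ^ 2) ^ (ν - 1 / 2))) ∩ (U ∩ Metric.closedBall 0 1) := by
    rintro x ⟨hxU, hx⟩
    rw [mem_ball_zero_iff] at hx
    refine ⟨(ENNReal.ofReal_pos.mpr (rpow_pos_of_pos ?_ _)).ne', hxU,
      mem_closedBall_zero_iff.mpr hx.le⟩
    nlinarith [norm_nonneg x]
  exact (hU.inter Metric.isOpen_ball).measure_pos volume hne |>.trans_le (measure_mono hsub)

namespace Fnu

theorem eq_smul_fnuBase : Fnu d ν = (fnuBase d ν univ)⁻¹ • fnuBase d ν := rfl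

instance : IsFiniteMeasure (Fnu d ν) :=
  ⟨(ENNReal.inv_mul_le_one _).trans_lt ENNReal.one_lt_top⟩

-- If the density is not integrable (as for `ν ≤ -1/2`), `⊤⁻¹ = 0` makes `Fnu d ν` the zero measure.
theorem eq_zero_of_fnuBase_univ_eq_top (h : fnuBase d ν univ = ⊤) : Fnu d ν = 0 := by
  rw [eq_smul_fnuBase, h, ENNReal.inv_top, zero_smul]

theorem ne_zero_of_isOpen (hfin : fnuBase d ν univ ≠ ⊤) {U : Set (EuclideanSpace ℝ (Fin d))}
    (hU : IsOpen U) (hne : (U ∩ Metric.ball 0 1).Nonempty) : Fnu d ν U ≠ 0 :=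
  mul_ne_zero (ENNReal.inv_ne_zero.mpr hfin) (fnuBase_pos_of_isOpen hU hne).ne'

theorem absolutelyContinuous : Fnu d ν ≪ volume.restrict (Metric.closedBall 0 1) :=
  Measure.smul_absolutelyContinuous.trans (withDensity_absolutelyContinuous _ _)

theorem preimage_linearIsometryEquiv
    (O : EuclideanSpace ℝ (Fin d) ≃ₗᵢ[ℝ] EuclideanSpace ℝ (Fin d))
    {s : Set (EuclideanSpace ℝ (Fin d))} (hs : MeasurableSet s) :
    Fnu d ν (O ⁻¹' s) = Fnu d ν s := by
  suffices fnuBase d ν (O ⁻¹' s) = fnuBase d ν s by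
    rw [eq_smul_fnuBase, Measure.smul_apply, Measure.smul_apply, this]
  have hball : (O : EuclideanSpace ℝ (Fin d) → EuclideanSpace ℝ (Fin d)) ⁻¹'
      Metric.closedBall 0 1 = Metric.closedBall 0 1 := by
    ext x
    simp
  have hO : MeasurePreserving O (volume.restrict (Metric.closedBall 0 1))
      (volume.restrict (Metric.closedBall 0 1)) := by
    have := O.measurePreserving.restrict_preimage
      (s := Metric.closedBall 0 1) measurableSet_closedBall
    rwa [hball] at this
  rw [fnuBase, withDensity_apply _ hs, withDensity_apply _ (hO.measurable hs),
    ← hO.setLIntegral_comp_preimage hs measurable_fnuBase_density]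
  simp only [LinearIsometryEquiv.norm_map]

end Fnu

namespace degW

variable {τ : ℝ}

theorem measurable : Measurable (degW d ν τ) := by
  have hs : MeasurableSet {p : EuclideanSpace ℝ (Fin d) × EuclideanSpace ℝ (Fin d) |
      τ ≤ ⟪p.1, p.2⟫} :=
    measurableSet_le measurable_const continuous_inner.measurable
  exact (measurable_measure_prodMk_left hs).ennreal_toReal

theorem eq_of_norm_eq {x x' : EuclideanSpace ℝ (Fin d)} (hx : ‖x‖ = ‖x'‖) :
    degW d ν τ x = degW d ν τ x' := by
  set O := Submodule.reflection (Submodule.span ℝ {x - x'})ᗮ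
  have hOx : O x = x' := Submodule.reflection_sub hx
  have hset : {y | τ ≤ ⟪x', y⟫} = O.symm ⁻¹' {y | τ ≤ ⟪x, y⟫} := by
    ext y
    rw [mem_preimage, mem_ofPred_eq, mem_ofPred_eq, ← hOx,
      ← O.inner_map_map x (O.symm y), O.apply_symm_apply]
  rw [degW, degW, hset, Fnu.preimage_linearIsometryEquiv O.symm (measurableSet_le_inner τ x)]

theorem eq_zero_of_norm_le (hτ : 0 < τ) {x : EuclideanSpace ℝ (Fin d)} (hx : ‖x‖ ≤ τ) :
    degW d ν τ x = 0 := by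
  suffices Fnu d ν {y | τ ≤ ⟪x, y⟫} = 0 by rw [degW, this, ENNReal.toReal_zero]
  apply Fnu.absolutelyContinuous
  rw [Measure.restrict_apply' measurableSet_closedBall]
  refine measure_mono_null (fun y ⟨hy, hy1⟩ => ?_)
    (Measure.addHaar_sphere_of_ne_zero volume 0 one_ne_zero)
  rw [mem_ofPred_eq] at hy
  rw [mem_closedBall_zero_iff] at hy1
  -- `τ ≤ ⟪x, y⟫ ≤ ‖x‖ ‖y‖ ≤ τ ‖y‖`
  have := real_inner_le_norm x y
  rw [mem_sphere_zero_iff_norm]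
  nlinarith [norm_nonneg x, norm_nonneg y]

theorem lt_of_norm_lt (hfin : fnuBase d ν univ ≠ ⊤) (hτ : 0 < τ)
    {x₁ x₂ : EuclideanSpace ℝ (Fin d)} (h₁ : τ < ‖x₁‖) (h₁₂ : ‖x₁‖ < ‖x₂‖) :
    degW d ν τ x₁ < degW d ν τ x₂ := by
  have hx₁ : 0 < ‖x₁‖ := hτ.trans h₁
  set c := ‖x₂‖ / ‖x₁‖
  have hc : 1 < c := (one_lt_div hx₁).mpr h₁₂
  have hnorm : ‖x₂‖ = ‖c • x₁‖ := by
    rw [norm_smul, Real.norm_of_nonneg (by positivity), div_mul_cancel₀ _ hx₁.ne']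
  have hset : {y | τ ≤ ⟪c • x₁, y⟫} = {y | τ / c ≤ ⟪x₁, y⟫} := by
    ext y
    rw [mem_ofPred_eq, mem_ofPred_eq, real_inner_smul_left, div_le_iff₀' (by positivity)]
  rw [eq_of_norm_eq hnorm, degW, degW, hset]
  exact ENNReal.toReal_strict_mono (measure_ne_top _ _) <|
    measure_le_inner_lt_of_lt (fun _ => Fnu.ne_zero_of_isOpen hfin) x₁ (by positivity)
      (div_lt_self hτ hc) h₁.le

theorem measure_level_set_eq_zero (hτ : 0 < τ) {h : ℝ} (hh : 0 < h) :
    Fnu d ν {x | degW d ν τ x = h} = 0 := by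
  rcases eq_or_ne (fnuBase d ν univ) ⊤ with hinf | hfin
  · rw [Fnu.eq_zero_of_fnuBase_univ_eq_top hinf, Measure.coe_zero, Pi.zero_apply]
  rcases eq_empty_or_nonempty {x | degW d ν τ x = h} with hempty | ⟨x₀, hx₀⟩
  · rw [hempty, measure_empty]
  have hτ_lt_norm : ∀ x, degW d ν τ x = h → τ < ‖x‖ := fun x hx => by
    by_contra! hle
    exact hh.ne' (hx ▸ eq_zero_of_norm_le hτ hle)
  have hsub : {x | degW d ν τ x = h} ⊆ Metric.sphere 0 ‖x₀‖ := by
    intro x hx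
    rw [mem_sphere_zero_iff_norm]
    rcases lt_trichotomy ‖x‖ ‖x₀‖ with hlt | heq | hgt
    · exact absurd (hx.trans hx₀.symm) (lt_of_norm_lt hfin hτ (hτ_lt_norm x hx) hlt).ne
    · exact heq
    · exact absurd (hx₀.trans hx.symm) (lt_of_norm_lt hfin hτ (hτ_lt_norm x₀ hx₀) hgt).ne
  exact Fnu.absolutelyContinuous.trans Measure.absolutelyContinuous_restrict <|
    measure_mono_null hsub <|
      Measure.addHaar_sphere_of_ne_zero volume 0 (hτ.trans (hτ_lt_norm x₀ hx₀)).ne'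

end degW

end Fnu

theorem tail_degW_continuousOn_general (d : ℕ) (ν τ : ℝ) (hτ0 : 0 < τ) :
    ContinuousOn (fun h : ℝ => (Fnu d ν {x | h ≤ degW d ν τ x}).toReal)
      (Set.Ioc 0 ((Fnu d ν {x | τ < ‖x‖}).toReal)) := fun _ hh =>
  (continuousAt_measure_le_of_measure_eq_zero degW.measurable
    (degW.measure_level_set_eq_zero hτ0 hh.1)).continuousWithinAt

/-- For the threshold graphon on the unit ball with measure `F_ν` and `0 < τ < 1`,
the tail function `h ↦ F_ν({x : d_W(x) ≥ h})` is continuous on `(0, h*]`, where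
`h* = F_ν(B^d \ τ B^d)`. -/
theorem tail_degW_continuousOn (d : ℕ) (hd : 0 < d) (ν τ : ℝ) (hν : -1 / 2 < ν)
    (hτ0 : 0 < τ) (hτ1 : τ < 1) :
    ContinuousOn (fun h : ℝ => (Fnu d ν {x | h ≤ degW d ν τ x}).toReal)
      (Set.Ioc 0 ((Fnu d ν {x | τ < ‖x‖}).toReal)) :=
  tail_degW_continuousOn_general d ν τ hτ0
end

section
/- Let B be an n×d real matrix with full column rank. Then ||BB^T - B(B^T B)^{-1} B^T||_F = ||Id_d - B^T B||_F. -/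
open Matrix

lemma frobNorm_eq_sqrt_trace {m k : ℕ} (M : Matrix (Fin m) (Fin k) ℝ) :
    Real.sqrt (∑ i, ∑ j, (M i j) ^ 2) = Real.sqrt (Matrix.trace (M * Mᵀ)) := by
  congr 1
  simp [Matrix.trace, Matrix.mul_apply, Matrix.diag, sq]

/-- The Frobenius norm of a real matrix. -/
noncomputable def frobNorm {m n : ℕ} (M : Matrix (Fin m) (Fin n) ℝ) : ℝ :=
  Real.sqrt (∑ i, ∑ j, (M i j) ^ 2)

/-- If `B` is an `n × d` real matrix with full column rank, then
`‖B Bᵀ - B (Bᵀ B)⁻¹ Bᵀ‖_F = ‖Id_d - Bᵀ B‖_F`. -/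
theorem frobNorm_proj_approx (n d : ℕ) (B : Matrix (Fin n) (Fin d) ℝ)
    (hB : B.rank = d) :
    frobNorm (B * Bᵀ - B * (Bᵀ * B)⁻¹ * Bᵀ) = frobNorm (1 - Bᵀ * B) := by
  have hrank : (Bᵀ * B).rank = d := by rw [Matrix.rank_transpose_mul_self]; exact hB
  have hU : IsUnit (Bᵀ * B) := by
    rw [← Matrix.mulVec_surjective_iff_isUnit]
    have : LinearMap.range (Matrix.mulVecLin (Bᵀ * B)) = ⊤ := by
      apply Submodule.eq_top_of_finrank_eq
      rw [← Matrix.rank, hrank]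
      simp
    intro v
    have := this ▸ Submodule.mem_top (x := v) (R := ℝ)
    obtain ⟨w, hw⟩ := this
    exact ⟨w, hw⟩
  have hUd : IsUnit (Bᵀ * B).det := (Matrix.isUnit_iff_isUnit_det _).mp hU
  have h1 : (Bᵀ * B) * (Bᵀ * B)⁻¹ = 1 := Matrix.mul_nonsing_inv _ hUd
  have h2 : (Bᵀ * B)⁻¹ * (Bᵀ * B) = 1 := Matrix.nonsing_inv_mul _ hUd
  have hGinvt : ((Bᵀ * B)⁻¹)ᵀ = (Bᵀ * B)⁻¹ := by
    rw [Matrix.transpose_nonsing_inv]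
    congr 1
    simp [Matrix.transpose_mul]
  unfold frobNorm
  rw [frobNorm_eq_sqrt_trace, frobNorm_eq_sqrt_trace]
  congr 1
  have e1 : Matrix.trace ((B * Bᵀ) * (B * Bᵀ)) = Matrix.trace ((Bᵀ * B) * (Bᵀ * B)) := by
    calc Matrix.trace ((B * Bᵀ) * (B * Bᵀ))
        = Matrix.trace (B * (Bᵀ * (B * Bᵀ))) := by simp only [Matrix.mul_assoc]
      _ = Matrix.trace ((Bᵀ * (B * Bᵀ)) * B) := Matrix.trace_mul_comm _ _
      _ = Matrix.trace ((Bᵀ * B) * (Bᵀ * B)) := by simp only [Matrix.mul_assoc]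
  have e2 : Matrix.trace ((B * Bᵀ) * (B * (Bᵀ * B)⁻¹ * Bᵀ)) = Matrix.trace (Bᵀ * B) := by
    calc Matrix.trace ((B * Bᵀ) * (B * (Bᵀ * B)⁻¹ * Bᵀ))
        = Matrix.trace (B * (Bᵀ * (B * ((Bᵀ * B)⁻¹ * Bᵀ)))) := by
          simp only [Matrix.mul_assoc]
      _ = Matrix.trace ((Bᵀ * (B * ((Bᵀ * B)⁻¹ * Bᵀ))) * B) := Matrix.trace_mul_comm _ _
      _ = Matrix.trace (Bᵀ * (B * ((Bᵀ * B)⁻¹ * (Bᵀ * B)))) := by simp only [Matrix.mul_assoc]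
      _ = Matrix.trace (Bᵀ * B) := by rw [h2, Matrix.mul_one]
  have e3 : Matrix.trace ((B * (Bᵀ * B)⁻¹ * Bᵀ) * (B * Bᵀ)) = Matrix.trace (Bᵀ * B) := by
    rw [Matrix.trace_mul_comm]; exact e2
  have e4 : Matrix.trace ((B * (Bᵀ * B)⁻¹ * Bᵀ) * (B * (Bᵀ * B)⁻¹ * Bᵀ)) =
      Matrix.trace (1 : Matrix (Fin d) (Fin d) ℝ) := by
    calc Matrix.trace ((B * (Bᵀ * B)⁻¹ * Bᵀ) * (B * (Bᵀ * B)⁻¹ * Bᵀ))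
        = Matrix.trace (B * ((Bᵀ * B)⁻¹ * (Bᵀ * (B * ((Bᵀ * B)⁻¹ * Bᵀ))))) := by
          simp only [Matrix.mul_assoc]
      _ = Matrix.trace (((Bᵀ * B)⁻¹ * (Bᵀ * (B * ((Bᵀ * B)⁻¹ * Bᵀ)))) * B) :=
          Matrix.trace_mul_comm _ _
      _ = Matrix.trace ((Bᵀ * B)⁻¹ * (Bᵀ * (B * ((Bᵀ * B)⁻¹ * (Bᵀ * B))))) := by
          simp only [Matrix.mul_assoc]
      _ = Matrix.trace (1 : Matrix (Fin d) (Fin d) ℝ) := by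
          rw [h2, Matrix.mul_one, h2]
  have hMt : (B * Bᵀ - B * (Bᵀ * B)⁻¹ * Bᵀ)ᵀ = B * Bᵀ - B * (Bᵀ * B)⁻¹ * Bᵀ := by
    simp [Matrix.transpose_sub, Matrix.transpose_mul, hGinvt, Matrix.mul_assoc]
  have hNt : (1 - Bᵀ * B)ᵀ = 1 - Bᵀ * B := by
    simp [Matrix.transpose_sub, Matrix.transpose_mul]
  rw [hMt, hNt]
  rw [Matrix.sub_mul, Matrix.mul_sub, Matrix.mul_sub, Matrix.sub_mul, Matrix.mul_sub, Matrix.mul_sub]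
  simp only [Matrix.trace_sub, e1, e2, e3, e4, Matrix.one_mul, Matrix.mul_one, Matrix.trace_one]
  ring
end
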